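/- Unconditional reliability (Proposition 1, forward direction): if Δμ = 0 and Δσ² = 2ΔΣ, then the Spread-Error relationship is satisfied in expectation, E[δ_τ] = 0, even though the ensemble need not be second-order exchangeable with the truth. -/

import Mathlib

open MeasureTheory

/-- Covariance of two real random variables. -/
noncomputable def cov {Ω : Type*} [MeasurableSpace Ω] (μ : Measure Ω) (f g : Ω → ℝ) : ℝ :=
  ∫ ω, (f ω - ∫ x, f x ∂μ) * (g ω - ∫ x, g x ∂μ) ∂μ

/-- Ensemble mean. -/
noncomputable def ensMean {Ω : Type*} {n : ℕ} (X : Fin n → Ω → ℝ) (ω : Ω) : ℝ :=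
  (∑ i, X i ω) / n

/-- Unbiased ensemble variance. -/
noncomputable def ensVar {Ω : Type*} {n : ℕ} (X : Fin n → Ω → ℝ) (ω : Ω) : ℝ :=
  (∑ i, (X i ω - ensMean X ω) ^ 2) / ((n : ℝ) - 1)

/-- The Spread-Error statistic `δ_τ = ((n+1)/n) S_e² − (X̄ − Y)²`. -/
noncomputable def spreadError {Ω : Type*} {n : ℕ} (X : Fin n → Ω → ℝ) (Y : Ω → ℝ) (ω : Ω) : ℝ :=
  (((n : ℝ) + 1) / n) * ensVar X ω - (ensMean X ω - Y ω) ^ 2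

theorem myIntMul {Ω : Type*} [MeasurableSpace Ω] {μ : Measure Ω} {f g : Ω → ℝ}
    (hf : MemLp f 2 μ) (hg : MemLp g 2 μ) :
    Integrable (fun ω => f ω * g ω) μ := by
  refine ((hf.integrable_sq.add hg.integrable_sq).div_const 2).mono'
    (hf.aestronglyMeasurable.mul hg.aestronglyMeasurable) (Filter.Eventually.of_forall fun ω => ?_)
  simp only [Pi.add_apply, Real.norm_eq_abs, abs_mul]
  nlinarith [sq_abs (f ω), sq_abs (g ω), sq_nonneg (|f ω| - |g ω|)]

theorem myCov {Ω : Type*} [MeasurableSpace Ω] {μ : Measure Ω} [IsProbabilityMeasure μ]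
    {f g : Ω → ℝ} (hf : MemLp f 2 μ) (hg : MemLp g 2 μ) :
    (∫ ω, f ω * g ω ∂μ) = cov μ f g + (∫ x, f x ∂μ) * (∫ x, g x ∂μ) := by
  set a := ∫ x, f x ∂μ with ha
  set b := ∫ x, g x ∂μ with hb
  have hfi : Integrable f μ := hf.integrable one_le_two
  have hgi : Integrable g μ := hg.integrable one_le_two
  have h1 : Integrable (fun ω => a * g ω + b * f ω - a * b) μ :=
    ((hgi.const_mul a).add (hfi.const_mul b)).sub (integrable_const _)
  have h2 : Integrable (fun ω => a * g ω + b * f ω) μ := (hgi.const_mul a).add (hfi.const_mul b)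
  have key : (fun ω => (f ω - a) * (g ω - b)) =
      fun ω => f ω * g ω - (a * g ω + b * f ω - a * b) := by funext ω; ring
  rw [cov, key, integral_sub (myIntMul hf hg) h1,
    integral_sub h2 (integrable_const _), integral_add (hgi.const_mul a) (hfi.const_mul b),
    integral_const_mul, integral_const_mul, integral_const]
  simp only [measure_univ, probReal_univ, ENNReal.toReal_one, one_smul, ← ha, ← hb]
  ring

theorem myPointwise {n : ℕ} (hn : 2 ≤ n) (x : Fin n → ℝ) (y : ℝ) :
    (((n : ℝ) + 1) / n) * ((∑ i, (x i - (∑ j, x j) / n) ^ 2) / ((n : ℝ) - 1)) -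
      ((∑ j, x j) / n - y) ^ 2 =
    (∑ i, ∑ j, (if i = j then 1 / (n : ℝ) else -2 / ((n : ℝ) * ((n : ℝ) - 1))) * (x i * x j))
      + (∑ i, (2 / (n : ℝ)) * (x i * y)) - y ^ 2 := by
  have h2 : (2 : ℝ) ≤ n := by exact_mod_cast hn
  have hn0 : (n : ℝ) ≠ 0 := by linarith
  have hn1 : (n : ℝ) - 1 ≠ 0 := by linarith
  set a : ℝ := 1 / (n : ℝ) with ha
  set b : ℝ := -2 / ((n : ℝ) * ((n : ℝ) - 1)) with hb
  set S := ∑ j, x j with hS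
  set Q := ∑ j, x j ^ 2 with hQ
  have hsq : ∑ i, (x i - S / n) ^ 2 = Q - 2 * (S / n) * S + n * (S / n) ^ 2 := by
    have e : ∀ i ∈ Finset.univ, (x i - S / (n : ℝ)) ^ 2
        = x i ^ 2 - 2 * (S / n) * x i + (S / n) ^ 2 := fun i _ => by ring
    rw [Finset.sum_congr rfl e, Finset.sum_add_distrib, Finset.sum_sub_distrib, ← Finset.mul_sum,
      ← hS, ← hQ, Finset.sum_const, Finset.card_univ, Fintype.card_fin, nsmul_eq_mul]
  have inner : ∀ i, (∑ j, (if i = j then a else b) * (x i * x j))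
      = (a - b) * x i ^ 2 + b * (x i * S) := by
    intro i
    have e : ∀ j ∈ Finset.univ, (if i = j then a else b) * (x i * x j)
        = b * (x i * x j) + (if j = i then (a - b) * (x i * x j) else 0) := by
      intro j _
      by_cases h : i = j
      · subst h; simp; ring
      · simp [h, Ne.symm h]
    rw [Finset.sum_congr rfl e, Finset.sum_add_distrib, Finset.sum_ite_eq' Finset.univ i,
      ← Finset.mul_sum, ← Finset.mul_sum, ← hS]
    simp only [Finset.mem_univ, if_true]
    ring
  rw [Finset.sum_congr rfl (fun i _ => inner i), Finset.sum_add_distrib, ← Finset.mul_sum,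
    ← Finset.mul_sum, ← hQ, ← Finset.mul_sum, ← Finset.sum_mul, ← hS, hsq]
  have hxy : ∑ i, x i * y = S * y := by rw [← Finset.sum_mul, ← hS]
  rw [hxy, ha, hb]
  field_simp
  ring

/-- Unconditional reliability (forward direction): if `Δμ = 0` and `Δσ² = 2ΔΣ`, then the
Spread-Error relationship is satisfied in expectation, `E[δ_τ] = 0`. -/
theorem unconditional_reliability
    {Ω : Type*} [MeasurableSpace Ω] (μ : Measure Ω) [IsProbabilityMeasure μ]
    (n : ℕ) (hn : 2 ≤ n) (X : Fin n → Ω → ℝ) (Y : Ω → ℝ)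
    (hL2 : ∀ i, MemLp (X i) 2 μ) (hYL2 : MemLp Y 2 μ)
    (μx σx2 c μy σy2 γ : ℝ) (hσx2 : 0 < σx2) (hσy2 : 0 < σy2)
    (hmean : ∀ i, ∫ ω, X i ω ∂μ = μx)
    (hvar : ∀ i, cov μ (X i) (X i) = σx2)
    (hcov : ∀ i j, i ≠ j → cov μ (X i) (X j) = c)
    (hmeanY : ∫ ω, Y ω ∂μ = μy)
    (hvarY : cov μ Y Y = σy2)
    (hcovXY : ∀ i, cov μ (X i) Y = γ)
    (hΔμ : μx - μy = 0)
    (hbal : σx2 - σy2 = 2 * (c - γ)) :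
    ∫ ω, spreadError X Y ω ∂μ = 0 := by
  have h2 : (2 : ℝ) ≤ n := by exact_mod_cast hn
  have hn0 : (n : ℝ) ≠ 0 := by linarith
  have hn1 : (n : ℝ) - 1 ≠ 0 := by linarith
  -- values of second moments
  have hXX : ∀ i j, ∫ ω, X i ω * X j ω ∂μ
      = (if i = j then σx2 else c) + μx * μx := by
    intro i j
    rw [myCov (hL2 i) (hL2 j), hmean i, hmean j]
    by_cases h : i = j
    · subst h; rw [hvar i, if_pos rfl]
    · rw [hcov i j h, if_neg h]
  have hXY : ∀ i, ∫ ω, X i ω * Y ω ∂μ = γ + μx * μy := by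
    intro i
    rw [myCov (hL2 i) hYL2, hcovXY i, hmean i, hmeanY]
  have hYY : ∫ ω, Y ω ^ 2 ∂μ = σy2 + μy * μy := by
    have e : (fun ω => Y ω ^ 2) = fun ω => Y ω * Y ω := by funext ω; ring
    rw [e, myCov hYL2 hYL2, hvarY, hmeanY]
  -- integrability
  have Imul : ∀ (i j : Fin n), Integrable (fun ω => X i ω * X j ω) μ :=
    fun i j => myIntMul (hL2 i) (hL2 j)
  have IA : Integrable (fun ω => ∑ i, ∑ j,
      (if i = j then 1 / (n : ℝ) else -2 / ((n : ℝ) * ((n : ℝ) - 1))) * (X i ω * X j ω)) μ :=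
    integrable_finset_sum _ (fun i _ => integrable_finset_sum _
      (fun j _ => (Imul i j).const_mul _))
  have IB : Integrable (fun ω => ∑ i, (2 / (n : ℝ)) * (X i ω * Y ω)) μ :=
    integrable_finset_sum _ (fun i _ => (myIntMul (hL2 i) hYL2).const_mul _)
  have IC : Integrable (fun ω => Y ω ^ 2) μ := hYL2.integrable_sq
  -- pointwise rewriting
  have hpt : (fun ω => spreadError X Y ω) = fun ω =>
      (∑ i, ∑ j, (if i = j then 1 / (n : ℝ) else -2 / ((n : ℝ) * ((n : ℝ) - 1)))
        * (X i ω * X j ω))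
      + (∑ i, (2 / (n : ℝ)) * (X i ω * Y ω)) - Y ω ^ 2 := by
    funext ω
    simpa [spreadError, ensVar, ensMean] using myPointwise hn (fun i => X i ω) (Y ω)
  have IAB : Integrable (fun ω =>
      (∑ i, ∑ j, (if i = j then 1 / (n : ℝ) else -2 / ((n : ℝ) * ((n : ℝ) - 1)))
        * (X i ω * X j ω)) + (∑ i, (2 / (n : ℝ)) * (X i ω * Y ω))) μ := IA.add IB
  rw [hpt, integral_sub IAB IC, integral_add IA IB, integral_finset_sum _
    (fun i _ => integrable_finset_sum _ (fun j _ => (Imul i j).const_mul _)),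
    integral_finset_sum _ (fun i _ => (myIntMul (hL2 i) hYL2).const_mul _), hYY]
  have hterm : ∀ i j : Fin n, ∫ ω,
      (if i = j then 1 / (n : ℝ) else -2 / ((n : ℝ) * ((n : ℝ) - 1))) * (X i ω * X j ω) ∂μ
      = (if i = j then (1 / (n : ℝ)) * (σx2 + μx * μx)
          else (-2 / ((n : ℝ) * ((n : ℝ) - 1))) * (c + μx * μx)) := by
    intro i j
    rw [integral_const_mul, hXX i j]
    by_cases h : i = j <;> simp [h]
  have hinner : ∀ i : Fin n, ∑ j : Fin n, (if i = j then (1 / (n : ℝ)) * (σx2 + μx * μx)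
      else (-2 / ((n : ℝ) * ((n : ℝ) - 1))) * (c + μx * μx))
      = (1 / (n : ℝ)) * (σx2 + μx * μx)
        + ((n : ℝ) - 1) * ((-2 / ((n : ℝ) * ((n : ℝ) - 1))) * (c + μx * μx)) := by
    intro i
    have e : ∀ j ∈ Finset.univ, (if i = j then (1 / (n : ℝ)) * (σx2 + μx * μx)
        else (-2 / ((n : ℝ) * ((n : ℝ) - 1))) * (c + μx * μx))
        = (-2 / ((n : ℝ) * ((n : ℝ) - 1))) * (c + μx * μx)
          + (if i = j then (1 / (n : ℝ)) * (σx2 + μx * μx)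
              - (-2 / ((n : ℝ) * ((n : ℝ) - 1))) * (c + μx * μx) else 0) := by
      intro j _; by_cases h : i = j <;> simp [h]
    rw [Finset.sum_congr rfl e, Finset.sum_add_distrib, Finset.sum_ite_eq, Finset.sum_const,
      Finset.card_univ, Fintype.card_fin, nsmul_eq_mul]
    simp only [Finset.mem_univ, if_true]
    ring
  have step1 : ∀ i : Fin n, ∫ ω, ∑ j,
      (if i = j then 1 / (n : ℝ) else -2 / ((n : ℝ) * ((n : ℝ) - 1))) * (X i ω * X j ω) ∂μ
      = (1 / (n : ℝ)) * (σx2 + μx * μx)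
        + ((n : ℝ) - 1) * ((-2 / ((n : ℝ) * ((n : ℝ) - 1))) * (c + μx * μx)) := by
    intro i
    rw [integral_finset_sum _ (fun j _ => (Imul i j).const_mul _),
      Finset.sum_congr rfl (fun j _ => hterm i j), hinner i]
  have step2 : ∀ i : Fin n, ∫ ω, (2 / (n : ℝ)) * (X i ω * Y ω) ∂μ
      = (2 / (n : ℝ)) * (γ + μx * μy) := by
    intro i
    rw [integral_const_mul, hXY i]
  rw [Finset.sum_congr rfl (fun i _ => step1 i), Finset.sum_congr rfl (fun i _ => step2 i),
    Finset.sum_const, Finset.sum_const, Finset.card_univ, Fintype.card_fin, nsmul_eq_mul,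
    nsmul_eq_mul]
  have hμ : μy = μx := by linarith
  subst hμ
  field_simp
  linear_combination hbal
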